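/- (Scaling identity for relativistic Hermite polynomials) For every integer n ≥ 0 and all complex numbers N, c, X: Ĥ_n^N(cX) = Σ_{l=0}^{⌊n/2⌋} (-1)^l (n!/((n-2l)! l!)) · (N)_l · (1-c²)^l · c^{n-2l} · Ĥ_{n-2l}^{N+l}(X); equivalently, for real N > 0, N^{n/2} H_n^N(cX√N) = Σ_{l=0}^{⌊n/2⌋} (-1)^l (n!/((n-2l)! l!)) (N)_l (1-c²)^l c^{n-2l} (N+l)^{(n-2l)/2} H_{n-2l}^{N+l}(X√(N+l)). -/
import Mathlib

open Finset Polynomial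

/-- The relativistic Hermite polynomial `H_n^N(X)` (real parameter `N > 0`). -/
noncomputable def RH (n : ℕ) (N X : ℝ) : ℝ :=
  ((ascPochhammer ℝ n).eval (2 * N) / (2 * Real.sqrt N) ^ n) *
    ∑ k ∈ Finset.range (n / 2 + 1),
      (-1) ^ k / (ascPochhammer ℝ k).eval (N + 1 / 2) *
        ((n.factorial : ℝ) / (((n - 2 * k).factorial : ℝ) * (k.factorial : ℝ))) *
        (2 * X / Real.sqrt N) ^ (n - 2 * k)

/-- The scaled relativistic Hermite polynomial `Ĥ_n^N(X)`, a polynomial in both `N` and `X`;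
for real `N > 0` it equals `N^(n/2) * H_n^N(X√N)`.  Here the quotient
`(2N)_n / (N + 1/2)_k` has been rewritten, using `(2N)_n = 2^n (N)_⌈n/2⌉ (N+1/2)_⌊n/2⌋`,
as the polynomial `2^n (N)_⌈n/2⌉ (N + 1/2 + k)_(⌊n/2⌋ - k)`. -/
noncomputable def Hhat (n : ℕ) (N X : ℂ) : ℂ :=
  ∑ k ∈ Finset.range (n / 2 + 1),
    (-1) ^ k * (ascPochhammer ℂ ((n + 1) / 2)).eval N *
      (ascPochhammer ℂ (n / 2 - k)).eval (N + 1 / 2 + (k : ℂ)) *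
      ((n.factorial : ℂ) / (((n - 2 * k).factorial : ℂ) * (k.factorial : ℂ))) *
      (2 * X) ^ (n - 2 * k)

lemma asc_mul_asc {S : Type*} [CommSemiring S] (a b : ℕ) (N : S) :
    (ascPochhammer S a).eval N * (ascPochhammer S b).eval (N + a) =
      (ascPochhammer S (a + b)).eval N := by
  have := congrArg (Polynomial.eval N) (ascPochhammer_mul (S := S) a b)
  simpa [Polynomial.eval_comp] using this

lemma tri {M : Type*} [AddCommMonoid M] (Q : ℕ) (f : ℕ → ℕ → M) :
    (∑ l ∈ Finset.range (Q + 1), ∑ k ∈ Finset.range (Q + 1 - l), f l k) =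
      ∑ m ∈ Finset.range (Q + 1), ∑ l ∈ Finset.range (m + 1), f l (m - l) := by
  rw [Finset.sum_sigma', Finset.sum_sigma']
  refine Finset.sum_nbij' (fun x => (⟨x.1 + x.2, x.1⟩ : (_ : ℕ) × ℕ))
    (fun x => (⟨x.2, x.1 - x.2⟩ : (_ : ℕ) × ℕ)) ?_ ?_ ?_ ?_ ?_ <;>
    simp only [Finset.mem_sigma, Finset.mem_range, Sigma.forall] <;>
    intro a b h
  · omega
  · omega
  · have : a + b - a = b := by omega
    simp [this]
  · obtain ⟨h1, h2⟩ := h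
    have : b + (a - b) = a := by omega
    simp [this]
  · show f a b = f a (a + b - a)
    congr 1
    omega

lemma asc_dup (N : ℝ) : ∀ n : ℕ, (ascPochhammer ℝ n).eval (2 * N) =
    2 ^ n * (ascPochhammer ℝ ((n + 1) / 2)).eval N *
      (ascPochhammer ℝ (n / 2)).eval (N + 1 / 2)
  | 0 => by simp
  | n + 1 => by
    have ih := asc_dup N n
    rcases Nat.even_or_odd n with ⟨q, hq⟩ | ⟨q, hq⟩
    · have h0 : n / 2 = q := by omega
      have h2 : (n + 1) / 2 = q := by omega
      have h1 : (n + 1 + 1) / 2 = q + 1 := by omega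
      rw [ascPochhammer_succ_eval n (2 * N), ih, h0, h2, h1, ascPochhammer_succ_eval q N]
      have hc : ((n : ℕ) : ℝ) = 2 * (q : ℝ) := by push_cast [hq]; ring
      rw [hc, pow_succ]
      ring
    · have h0 : n / 2 = q := by omega
      have h2 : (n + 1) / 2 = q + 1 := by omega
      have h1 : (n + 1 + 1) / 2 = q + 1 := by omega
      rw [ascPochhammer_succ_eval n (2 * N), ih, h0, h2, h1,
        ascPochhammer_succ_eval q (N + 1 / 2)]
      have hc : ((n : ℕ) : ℝ) = 2 * (q : ℝ) + 1 := by push_cast [hq]; ring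
      rw [hc, pow_succ]
      ring
  termination_by n => n

lemma asc_cast (k : ℕ) (x : ℝ) :
    ((((ascPochhammer ℝ k).eval x : ℝ)) : ℂ) = (ascPochhammer ℂ k).eval (x : ℂ) := by
  rw [ascPochhammer_eval₂ (algebraMap ℝ ℂ) k]
  have hx : ((x : ℂ)) = algebraMap ℝ ℂ x := rfl
  rw [hx, Polynomial.eval₂_at_apply]
  rfl

lemma fac_key (n m l : ℕ) (hl : l ≤ m) (hm : 2 * m ≤ n) :
    ((n.factorial : ℂ) / (((n - 2 * l).factorial : ℂ) * (l.factorial : ℂ))) *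
      (((n - 2 * l).factorial : ℂ) /
        (((n - 2 * l - 2 * (m - l)).factorial : ℂ) * ((m - l).factorial : ℂ))) =
      ((n.factorial : ℂ) / (((n - 2 * m).factorial : ℂ) * (m.factorial : ℂ))) *
        (m.choose l : ℂ) := by
  have e1 : n - 2 * l - 2 * (m - l) = n - 2 * m := by omega
  rw [e1]
  have hfac : ((m.choose l : ℕ) : ℂ) * (l.factorial : ℂ) * ((m - l).factorial : ℂ)
      = (m.factorial : ℂ) := by
    exact_mod_cast congrArg (Nat.cast : ℕ → ℂ) (Nat.choose_mul_factorial_mul_factorial hl)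
  have h1 : ((n - 2 * l).factorial : ℂ) ≠ 0 := Nat.cast_ne_zero.mpr (Nat.factorial_ne_zero _)
  have h2 : ((n - 2 * m).factorial : ℂ) ≠ 0 := Nat.cast_ne_zero.mpr (Nat.factorial_ne_zero _)
  have h3 : (l.factorial : ℂ) ≠ 0 := Nat.cast_ne_zero.mpr (Nat.factorial_ne_zero _)
  have h4 : ((m - l).factorial : ℂ) ≠ 0 := Nat.cast_ne_zero.mpr (Nat.factorial_ne_zero _)
  have h5 : (m.factorial : ℂ) ≠ 0 := Nat.cast_ne_zero.mpr (Nat.factorial_ne_zero _)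
  have h6 : (m.choose l : ℂ) ≠ 0 := Nat.cast_ne_zero.mpr (Nat.choose_pos hl).ne'
  rw [← hfac]
  field_simp

lemma hhat_scaling (n : ℕ) (N c X : ℂ) :
    Hhat n N (c * X) =
      ∑ l ∈ Finset.range (n / 2 + 1),
        (-1) ^ l * ((n.factorial : ℂ) / (((n - 2 * l).factorial : ℂ) * (l.factorial : ℂ))) *
          (ascPochhammer ℂ l).eval N * (1 - c ^ 2) ^ l * c ^ (n - 2 * l) *
          Hhat (n - 2 * l) (N + (l : ℂ)) X := by
  have step1 : ∑ l ∈ Finset.range (n / 2 + 1),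
        (-1) ^ l * ((n.factorial : ℂ) / (((n - 2 * l).factorial : ℂ) * (l.factorial : ℂ))) *
          (ascPochhammer ℂ l).eval N * (1 - c ^ 2) ^ l * c ^ (n - 2 * l) *
          Hhat (n - 2 * l) (N + (l : ℂ)) X
      = ∑ l ∈ Finset.range (n / 2 + 1), ∑ k ∈ Finset.range (n / 2 + 1 - l),
          ((-1) ^ l * ((n.factorial : ℂ) / (((n - 2 * l).factorial : ℂ) * (l.factorial : ℂ))) *
            (ascPochhammer ℂ l).eval N * (1 - c ^ 2) ^ l * c ^ (n - 2 * l)) *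
          ((-1) ^ k * (ascPochhammer ℂ ((n - 2 * l + 1) / 2)).eval (N + (l : ℂ)) *
            (ascPochhammer ℂ ((n - 2 * l) / 2 - k)).eval (N + (l : ℂ) + 1 / 2 + (k : ℂ)) *
            (((n - 2 * l).factorial : ℂ) /
              (((n - 2 * l - 2 * k).factorial : ℂ) * (k.factorial : ℂ))) *
            (2 * X) ^ (n - 2 * l - 2 * k)) := by
    refine Finset.sum_congr rfl fun l hl => ?_
    have hl' : l ≤ n / 2 := by simpa [Nat.lt_succ_iff] using hl
    have hr : (n - 2 * l) / 2 + 1 = n / 2 + 1 - l := by omega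
    rw [Hhat, hr, Finset.mul_sum]
  rw [step1, tri]
  rw [Hhat]
  refine Finset.sum_congr rfl fun m hm => ?_
  have hm' : m ≤ n / 2 := by simpa [Nat.lt_succ_iff] using hm
  have key : ∀ l ∈ Finset.range (m + 1),
      ((-1) ^ l * ((n.factorial : ℂ) / (((n - 2 * l).factorial : ℂ) * (l.factorial : ℂ))) *
        (ascPochhammer ℂ l).eval N * (1 - c ^ 2) ^ l * c ^ (n - 2 * l)) *
      ((-1) ^ (m - l) * (ascPochhammer ℂ ((n - 2 * l + 1) / 2)).eval (N + (l : ℂ)) *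
        (ascPochhammer ℂ ((n - 2 * l) / 2 - (m - l))).eval (N + (l : ℂ) + 1 / 2 + ((m - l : ℕ) : ℂ)) *
        (((n - 2 * l).factorial : ℂ) /
          (((n - 2 * l - 2 * (m - l)).factorial : ℂ) * ((m - l).factorial : ℂ))) *
        (2 * X) ^ (n - 2 * l - 2 * (m - l)))
      = ((-1) ^ m * (ascPochhammer ℂ ((n + 1) / 2)).eval N *
          (ascPochhammer ℂ (n / 2 - m)).eval (N + 1 / 2 + (m : ℂ)) *
          ((n.factorial : ℂ) / (((n - 2 * m).factorial : ℂ) * (m.factorial : ℂ))) *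
          (2 * X) ^ (n - 2 * m) * c ^ (n - 2 * m)) *
        ((1 - c ^ 2) ^ l * (c ^ 2) ^ (m - l) * (m.choose l : ℂ)) := by
    intro l hl
    have hl' : l ≤ m := by simpa [Nat.lt_succ_iff] using hl
    have e1 : n - 2 * l - 2 * (m - l) = n - 2 * m := by omega
    have e2 : (n - 2 * l + 1) / 2 = (n + 1) / 2 - l := by omega
    have e3 : (n - 2 * l) / 2 - (m - l) = n / 2 - m := by omega
    have e4 : ((m - l : ℕ) : ℂ) = (m : ℂ) - (l : ℂ) := by
      push_cast [Nat.cast_sub hl']; ring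
    have e5 : N + (l : ℂ) + 1 / 2 + ((m : ℂ) - (l : ℂ)) = N + 1 / 2 + (m : ℂ) := by ring
    have e6 : (ascPochhammer ℂ l).eval N *
        (ascPochhammer ℂ ((n + 1) / 2 - l)).eval (N + (l : ℂ)) =
        (ascPochhammer ℂ ((n + 1) / 2)).eval N := by
      have h := asc_mul_asc (S := ℂ) l ((n + 1) / 2 - l) N
      rwa [show l + ((n + 1) / 2 - l) = (n + 1) / 2 by omega] at h
    have e7 : c ^ (n - 2 * l) = c ^ (n - 2 * m) * (c ^ 2) ^ (m - l) := by
      rw [← pow_mul, ← pow_add]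
      congr 1
      omega
    have e8 : ((-1 : ℂ)) ^ l * (-1) ^ (m - l) = (-1) ^ m := by
      rw [← pow_add]
      congr 1
      omega
    have e9 := fac_key n m l hl' (by omega)
    rw [e2, e3, e4, e5, e7]
    calc ((-1) ^ l * (↑n.factorial / (↑(n - 2 * l).factorial * ↑l.factorial)) *
            (ascPochhammer ℂ l).eval N * (1 - c ^ 2) ^ l * (c ^ (n - 2 * m) * (c ^ 2) ^ (m - l))) *
          ((-1) ^ (m - l) * (ascPochhammer ℂ ((n + 1) / 2 - l)).eval (N + (l : ℂ)) *
            (ascPochhammer ℂ (n / 2 - m)).eval (N + 1 / 2 + (m : ℂ)) *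
            (↑(n - 2 * l).factorial / (↑(n - 2 * l - 2 * (m - l)).factorial * ↑(m - l).factorial)) *
            (2 * X) ^ (n - 2 * l - 2 * (m - l)))
        = (((-1 : ℂ)) ^ l * (-1) ^ (m - l)) *
          ((ascPochhammer ℂ l).eval N * (ascPochhammer ℂ ((n + 1) / 2 - l)).eval (N + (l : ℂ))) *
          ((↑n.factorial / (↑(n - 2 * l).factorial * ↑l.factorial)) *
            (↑(n - 2 * l).factorial / (↑(n - 2 * l - 2 * (m - l)).factorial * ↑(m - l).factorial))) *
          ((ascPochhammer ℂ (n / 2 - m)).eval (N + 1 / 2 + (m : ℂ))) *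
          ((1 - c ^ 2) ^ l * (c ^ 2) ^ (m - l)) * (c ^ (n - 2 * m)) *
          (2 * X) ^ (n - 2 * l - 2 * (m - l)) := by ring
      _ = _ := by
          rw [e6, e8, e9, e1]
          ring
  rw [Finset.sum_congr rfl key, ← Finset.mul_sum]
  have hbin : ∑ l ∈ Finset.range (m + 1), (1 - c ^ 2) ^ l * (c ^ 2) ^ (m - l) * (m.choose l : ℂ)
      = 1 := by
    rw [← add_pow]
    norm_num
  rw [hbin, mul_one]
  rw [mul_pow 2 (c * X)]
  ring_nf

lemma rh_real (n : ℕ) {N : ℝ} (hN : 0 < N) (X : ℝ) :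
    N ^ ((n : ℝ) / 2) * RH n N (X * Real.sqrt N)
      = ∑ k ∈ Finset.range (n / 2 + 1),
          (-1) ^ k * (ascPochhammer ℝ ((n + 1) / 2)).eval N *
            (ascPochhammer ℝ (n / 2 - k)).eval (N + 1 / 2 + (k : ℝ)) *
            ((n.factorial : ℝ) / (((n - 2 * k).factorial : ℝ) * (k.factorial : ℝ))) *
            (2 * X) ^ (n - 2 * k) := by
  have hs : Real.sqrt N ≠ 0 := by positivity
  have hpow : (N : ℝ) ^ ((n : ℝ) / 2) = Real.sqrt N ^ n := by
    rw [Real.sqrt_eq_rpow, ← Real.rpow_natCast (N ^ ((1 : ℝ) / 2)) n, ← Real.rpow_mul hN.le]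
    ring_nf
  have harg : 2 * (X * Real.sqrt N) / Real.sqrt N = 2 * X := by field_simp
  have hpre : N ^ ((n : ℝ) / 2) * ((ascPochhammer ℝ n).eval (2 * N) / (2 * Real.sqrt N) ^ n)
      = (ascPochhammer ℝ ((n + 1) / 2)).eval N * (ascPochhammer ℝ (n / 2)).eval (N + 1 / 2) := by
    rw [hpow, asc_dup, mul_pow]
    field_simp
  rw [RH, harg, ← mul_assoc, hpre, Finset.mul_sum]
  refine Finset.sum_congr rfl fun k hk => ?_
  have hk' : k ≤ n / 2 := by simpa [Nat.lt_succ_iff] using hk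
  have hsplit : (ascPochhammer ℝ k).eval (N + 1 / 2) *
      (ascPochhammer ℝ (n / 2 - k)).eval (N + 1 / 2 + (k : ℝ)) =
      (ascPochhammer ℝ (n / 2)).eval (N + 1 / 2) := by
    have h := asc_mul_asc (S := ℝ) k (n / 2 - k) (N + 1 / 2)
    rwa [show k + (n / 2 - k) = n / 2 by omega] at h
  have hkne : (ascPochhammer ℝ k).eval (N + 1 / 2) ≠ 0 :=
    (ascPochhammer_pos _ _ (by linarith)).ne'
  have h1 : ((n - 2 * k).factorial : ℝ) ≠ 0 := Nat.cast_ne_zero.mpr (Nat.factorial_ne_zero _)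
  have h2 : (k.factorial : ℝ) ≠ 0 := Nat.cast_ne_zero.mpr (Nat.factorial_ne_zero _)
  rw [← hsplit, div_eq_mul_inv ((-1 : ℝ) ^ k)]
  linear_combination ((-1 : ℝ) ^ k * (ascPochhammer ℝ ((n + 1) / 2)).eval N *
      (ascPochhammer ℝ (n / 2 - k)).eval (N + 1 / 2 + (k : ℝ)) *
      ((n.factorial : ℝ) / (((n - 2 * k).factorial : ℝ) * (k.factorial : ℝ))) *
      (2 * X) ^ (n - 2 * k)) * mul_inv_cancel₀ hkne

lemma rh_bridge (n : ℕ) {N : ℝ} (hN : 0 < N) (X : ℝ) :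
    ((N ^ ((n : ℝ) / 2) * RH n N (X * Real.sqrt N) : ℝ) : ℂ) = Hhat n (N : ℂ) (X : ℂ) := by
  rw [rh_real n hN X, Hhat]
  push_cast
  refine Finset.sum_congr rfl fun k hk => ?_
  rw [asc_cast, asc_cast]
  push_cast
  ring

/-- Scaling identity for relativistic Hermite polynomials:
`Ĥ_n^N(cX) = Σ_l (-1)^l (n!/((n-2l)! l!)) (N)_l (1-c²)^l c^(n-2l) Ĥ_(n-2l)^(N+l)(X)`;
equivalently, for real `N > 0`,
`N^(n/2) H_n^N(cX√N)
  = Σ_l (-1)^l (n!/((n-2l)! l!)) (N)_l (1-c²)^l c^(n-2l) (N+l)^((n-2l)/2) H_(n-2l)^(N+l)(X√(N+l))`. -/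
theorem RH_scaling :
    (∀ (n : ℕ) (N c X : ℂ),
      Hhat n N (c * X) =
        ∑ l ∈ Finset.range (n / 2 + 1),
          (-1) ^ l * ((n.factorial : ℂ) / (((n - 2 * l).factorial : ℂ) * (l.factorial : ℂ))) *
            (ascPochhammer ℂ l).eval N * (1 - c ^ 2) ^ l * c ^ (n - 2 * l) *
            Hhat (n - 2 * l) (N + (l : ℂ)) X) ∧
    (∀ (n : ℕ) (N : ℝ), 0 < N → ∀ c X : ℝ,
      N ^ ((n : ℝ) / 2) * RH n N (c * X * Real.sqrt N) =
        ∑ l ∈ Finset.range (n / 2 + 1),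
          (-1) ^ l * ((n.factorial : ℝ) / (((n - 2 * l).factorial : ℝ) * (l.factorial : ℝ))) *
            (ascPochhammer ℝ l).eval N * (1 - c ^ 2) ^ l * c ^ (n - 2 * l) *
            (N + (l : ℝ)) ^ (((n - 2 * l : ℕ) : ℝ) / 2) *
            RH (n - 2 * l) (N + (l : ℝ)) (X * Real.sqrt (N + (l : ℝ)))) := by
  constructor
  · exact hhat_scaling
  · intro n N hN c X
    have hNl : ∀ l : ℕ, (0 : ℝ) < N + l := fun l => by positivity
    apply Complex.ofReal_injective
    calc ((N ^ ((n : ℝ) / 2) * RH n N (c * X * Real.sqrt N) : ℝ) : ℂ)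
        = Hhat n (N : ℂ) ((c * X : ℝ) : ℂ) := rh_bridge n hN (c * X)
      _ = Hhat n (N : ℂ) ((c : ℂ) * (X : ℂ)) := by push_cast; rfl
      _ = ∑ l ∈ Finset.range (n / 2 + 1),
            (-1) ^ l * ((n.factorial : ℂ) / (((n - 2 * l).factorial : ℂ) * (l.factorial : ℂ))) *
              (ascPochhammer ℂ l).eval (N : ℂ) * (1 - (c : ℂ) ^ 2) ^ l *
              (c : ℂ) ^ (n - 2 * l) * Hhat (n - 2 * l) ((N : ℂ) + (l : ℂ)) (X : ℂ) :=
        hhat_scaling n N c X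
      _ = _ := by
          rw [Complex.ofReal_sum]
          refine Finset.sum_congr rfl fun l hl => ?_
          have hb := rh_bridge (n - 2 * l) (hNl l) X
          rw [Complex.ofReal_mul] at hb
          rw [Complex.ofReal_mul, Complex.ofReal_mul]
          push_cast [asc_cast] at hb ⊢
          linear_combination (-(-1 : ℂ) ^ l *
            ((n.factorial : ℂ) / (((n - 2 * l).factorial : ℂ) * (l.factorial : ℂ))) *
            (ascPochhammer ℂ l).eval (N : ℂ) * (1 - (c : ℂ) ^ 2) ^ l *
            (c : ℂ) ^ (n - 2 * l)) * hb
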